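/- arXiv:math/9712281 — 2 statements merged into one kernel-verified Lean document; each statement's English description precedes it below -/
import Mathlib

section
/- The function ρ_c(p,q) = ‖p^{-1}·q‖_c on the Heisenberg group ℋ_n, where ‖(ξ,v)‖_c = (‖ξ‖⁴ + v²)^{1/4}, is a metric: ρ_c(p,q) ≥ 0 with equality iff p = q, ρ_c(p,q) = ρ_c(q,p), and ρ_c(p,r) ≤ ρ_c(p,q) + ρ_c(q,r) for all p,q,r; moreover it is left-invariant, i.e. ρ_c(g·p, g·q) = ρ_c(p,q) for all g,p,q ∈ ℋ_n. -/
noncomputable section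

/-- The Heisenberg product on `ℂ^{n-1} × ℝ`. -/
def heisMul {m : ℕ} (p q : EuclideanSpace ℂ (Fin m) × ℝ) : EuclideanSpace ℂ (Fin m) × ℝ :=
  (p.1 + q.1, p.2 + q.2 + 2 * (inner ℂ p.1 q.1 : ℂ).im)

/-- The Heisenberg inverse `(ξ,v)⁻¹ = (−ξ,−v)`. -/
def heisInv {m : ℕ} (p : EuclideanSpace ℂ (Fin m) × ℝ) : EuclideanSpace ℂ (Fin m) × ℝ :=
  (-p.1, -p.2)

/-- The Cygan norm `‖(ξ,v)‖_c = (‖ξ‖⁴ + v²)^{1/4}`. -/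
def cyganNorm {m : ℕ} (p : EuclideanSpace ℂ (Fin m) × ℝ) : ℝ :=
  (‖p.1‖ ^ 4 + p.2 ^ 2) ^ ((1 : ℝ) / 4)

/-- The Cygan metric `ρ_c(p,q) = ‖p⁻¹·q‖_c`. -/
def cyganDist {m : ℕ} (p q : EuclideanSpace ℂ (Fin m) × ℝ) : ℝ :=
  cyganNorm (heisMul (heisInv p) q)

/-- Auxiliary complex quantity: `ρ_c(p,q)² = |E p q|^{1/2}`. -/
def cyganE {m : ℕ} (p q : EuclideanSpace ℂ (Fin m) × ℝ) : ℂ :=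
  ((‖p.1‖ ^ 2 + ‖q.1‖ ^ 2 : ℝ) : ℂ) - 2 * (inner ℂ p.1 q.1 : ℂ)
    + Complex.I * ((q.2 - p.2 : ℝ) : ℂ)

lemma cyganE_re {m : ℕ} (p q : EuclideanSpace ℂ (Fin m) × ℝ) :
    (cyganE p q).re = ‖q.1 - p.1‖ ^ 2 := by
  have h := @norm_sub_sq ℂ _ _ _ _ q.1 p.1
  have hsymm : (inner ℂ q.1 p.1 : ℂ).re = (inner ℂ p.1 q.1 : ℂ).re := by
    rw [← inner_conj_symm p.1 q.1, Complex.conj_re]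
  simp only [cyganE, Complex.add_re, Complex.sub_re, Complex.ofReal_re, Complex.mul_re,
    Complex.I_re, Complex.I_im, Complex.ofReal_im, Complex.re_ofNat, Complex.im_ofNat]
  simp only [RCLike.re_to_complex] at h
  rw [h, hsymm]
  ring

lemma cyganE_im {m : ℕ} (p q : EuclideanSpace ℂ (Fin m) × ℝ) :
    (cyganE p q).im = (q.2 - p.2) - 2 * (inner ℂ p.1 q.1 : ℂ).im := by
  simp only [cyganE, Complex.add_im, Complex.sub_im, Complex.ofReal_im, Complex.mul_im,
    Complex.I_re, Complex.I_im, Complex.ofReal_re, Complex.re_ofNat, Complex.im_ofNat]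
  ring

lemma cyganDist_eq {m : ℕ} (p q : EuclideanSpace ℂ (Fin m) × ℝ) :
    cyganDist p q = Real.sqrt (‖cyganE p q‖) := by
  have h1 : (-p.1 + q.1 : EuclideanSpace ℂ (Fin m)) = q.1 - p.1 := by abel
  have habs : ‖cyganE p q‖ =
      Real.sqrt (‖q.1 - p.1‖ ^ 4 + ((q.2 - p.2) - 2 * (inner ℂ p.1 q.1 : ℂ).im) ^ 2) := by
    rw [Complex.norm_def, Complex.normSq_apply, cyganE_re, cyganE_im]
    ring_nf
  have hx : (0:ℝ) ≤ ‖q.1 - p.1‖ ^ 4 + ((q.2 - p.2) - 2 * (inner ℂ p.1 q.1 : ℂ).im) ^ 2 := by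
    positivity
  have key : ∀ x : ℝ, 0 ≤ x → Real.sqrt (Real.sqrt x) = x ^ ((1:ℝ)/4) := by
    intro x hx
    rw [Real.sqrt_eq_rpow, Real.sqrt_eq_rpow, ← Real.rpow_mul hx]
    norm_num
  rw [habs, key _ hx]
  simp only [cyganDist, cyganNorm, heisMul, heisInv, h1, inner_neg_left, Complex.neg_im]
  have hy : -p.2 + q.2 + 2 * -(inner ℂ p.1 q.1 : ℂ).im
      = (q.2 - p.2) - 2 * (inner ℂ p.1 q.1 : ℂ).im := by ring
  rw [hy]

lemma cyganE_symm {m : ℕ} (p q : EuclideanSpace ℂ (Fin m) × ℝ) :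
    cyganE q p = (starRingEnd ℂ) (cyganE p q) := by
  simp only [cyganE, map_add, map_sub, map_mul, Complex.conj_ofReal, Complex.conj_I,
    inner_conj_symm, map_ofNat]
  push_cast
  ring

/-- key identity for the triangle inequality -/
lemma cyganE_triangle_id {m : ℕ} (p q r : EuclideanSpace ℂ (Fin m) × ℝ) :
    cyganE p r = cyganE p q + cyganE q r - 2 * (inner ℂ (p.1 - q.1) (r.1 - q.1) : ℂ) := by
  have hq : (inner ℂ q.1 q.1 : ℂ) = ((‖q.1‖ ^ 2 : ℝ) : ℂ) := by
    rw [inner_self_eq_norm_sq_to_K]; norm_cast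
  simp only [cyganE, inner_sub_left, inner_sub_right, hq]
  push_cast
  ring

theorem cygan_dist_nonneg {m : ℕ} (p q : EuclideanSpace ℂ (Fin m) × ℝ) :
    0 ≤ cyganDist p q := by
  rw [cyganDist_eq]; exact Real.sqrt_nonneg _

theorem cygan_dist_triangle {m : ℕ} (p q r : EuclideanSpace ℂ (Fin m) × ℝ) :
    cyganDist p r ≤ cyganDist p q + cyganDist q r := by
  rw [cyganDist_eq, cyganDist_eq, cyganDist_eq]
  set a := Real.sqrt (‖cyganE p q‖) with ha
  set b := Real.sqrt (‖cyganE q r‖) with hb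
  have ha0 : 0 ≤ a := Real.sqrt_nonneg _
  have hb0 : 0 ≤ b := Real.sqrt_nonneg _
  -- norm bounds
  have hpq : ‖p.1 - q.1‖ ≤ a := by
    have h1 : ‖p.1 - q.1‖ ^ 2 = (cyganE p q).re := by rw [cyganE_re, norm_sub_rev]
    have h2 : (cyganE p q).re ≤ ‖cyganE p q‖ := Complex.re_le_norm _
    have := Real.sqrt_le_sqrt (le_trans (le_of_eq h1) h2)
    rwa [Real.sqrt_sq (norm_nonneg _)] at this
  have hqr : ‖r.1 - q.1‖ ≤ b := by
    have h1 : ‖r.1 - q.1‖ ^ 2 = (cyganE q r).re := cyganE_re q r ▸ rfl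
    have h2 : (cyganE q r).re ≤ ‖cyganE q r‖ := Complex.re_le_norm _
    have := Real.sqrt_le_sqrt (le_trans (le_of_eq h1) h2)
    rwa [Real.sqrt_sq (norm_nonneg _)] at this
  have key : ‖cyganE p r‖ ≤ (a + b) ^ 2 := by
    rw [cyganE_triangle_id p q r]
    calc ‖cyganE p q + cyganE q r - 2 * (inner ℂ (p.1 - q.1) (r.1 - q.1) : ℂ)‖
        ≤ ‖cyganE p q‖ + ‖cyganE q r‖
            + ‖2 * (inner ℂ (p.1 - q.1) (r.1 - q.1) : ℂ)‖ := by
          calc _ ≤ ‖cyganE p q + cyganE q r‖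
                + ‖2 * (inner ℂ (p.1 - q.1) (r.1 - q.1) : ℂ)‖ :=
              norm_sub_le _ _
            _ ≤ _ := by gcongr; exact norm_add_le _ _
      _ ≤ a ^ 2 + b ^ 2 + 2 * (a * b) := by
          have h1 : ‖cyganE p q‖ = a ^ 2 := by
            rw [ha, Real.sq_sqrt (norm_nonneg _)]
          have h2 : ‖cyganE q r‖ = b ^ 2 := by
            rw [hb, Real.sq_sqrt (norm_nonneg _)]
          have h3 : ‖2 * (inner ℂ (p.1 - q.1) (r.1 - q.1) : ℂ)‖ ≤ 2 * (a * b) := by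
            rw [norm_mul]
            simp only [Complex.norm_ofNat]
            gcongr
            calc ‖(inner ℂ (p.1 - q.1) (r.1 - q.1) : ℂ)‖
                ≤ ‖p.1 - q.1‖ * ‖r.1 - q.1‖ := by
                  have := norm_inner_le_norm (𝕜 := ℂ) (p.1 - q.1) (r.1 - q.1)
                  exact this
              _ ≤ a * b := mul_le_mul hpq hqr (norm_nonneg _) ha0
          rw [h1, h2]
          gcongr
      _ = (a + b) ^ 2 := by ring
  calc Real.sqrt (‖cyganE p r‖) ≤ Real.sqrt ((a + b) ^ 2) :=
        Real.sqrt_le_sqrt key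
    _ = a + b := Real.sqrt_sq (by linarith)

theorem cygan_dist_symm {m : ℕ} (p q : EuclideanSpace ℂ (Fin m) × ℝ) :
    cyganDist p q = cyganDist q p := by
  rw [cyganDist_eq, cyganDist_eq, cyganE_symm, Complex.norm_conj]

theorem cygan_dist_eq_zero {m : ℕ} (p q : EuclideanSpace ℂ (Fin m) × ℝ) :
    cyganDist p q = 0 ↔ p = q := by
  constructor
  · intro h
    rw [cyganDist_eq, Real.sqrt_eq_zero (norm_nonneg _)] at h
    have hE : cyganE p q = 0 := by
      have := norm_eq_zero.mp h
      exact this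
    have hre := congrArg Complex.re hE
    have him := congrArg Complex.im hE
    rw [cyganE_re] at hre
    rw [cyganE_im] at him
    simp only [Complex.zero_re, Complex.zero_im] at hre him
    have h1 : q.1 = p.1 := by
      have : q.1 - p.1 = 0 := by
        have := pow_eq_zero_iff (n := 2) (by norm_num) |>.mp hre
        exact norm_eq_zero.mp this
      exact sub_eq_zero.mp this
    have hinner : (inner ℂ p.1 q.1 : ℂ).im = 0 := by
      rw [h1]
      have := inner_self_im (𝕜 := ℂ) p.1
      simpa using this
    rw [hinner] at him
    have h2 : q.2 = p.2 := by linarith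
    exact Prod.ext h1.symm h2.symm
  · intro h
    subst h
    rw [cyganDist_eq]
    have : cyganE p p = 0 := by
      have h : (inner ℂ p.1 p.1 : ℂ) = ((‖p.1‖ ^ 2 : ℝ) : ℂ) := by
        rw [inner_self_eq_norm_sq_to_K]; norm_cast
      simp only [cyganE, h, sub_self, Complex.ofReal_zero, mul_zero, add_zero]
      push_cast
      ring
    rw [this]
    simp

theorem cygan_dist_left_invariant {m : ℕ} (g p q : EuclideanSpace ℂ (Fin m) × ℝ) :
    cyganDist (heisMul g p) (heisMul g q) = cyganDist p q := by
  unfold cyganDist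
  congr 1
  unfold heisMul heisInv
  refine Prod.ext ?_ ?_
  · show -(g.1 + p.1) + (g.1 + q.1) = -p.1 + q.1
    abel
  · show -(g.2 + p.2 + 2 * (inner ℂ g.1 p.1 : ℂ).im) + (g.2 + q.2 + 2 * (inner ℂ g.1 q.1 : ℂ).im)
      + 2 * (inner ℂ (-(g.1 + p.1)) (g.1 + q.1) : ℂ).im
      = -p.2 + q.2 + 2 * (inner ℂ (-p.1) q.1 : ℂ).im
    have hgg : (inner ℂ g.1 g.1 : ℂ).im = 0 := by
      have := inner_self_im (𝕜 := ℂ) g.1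
      simpa using this
    have hpg : (inner ℂ p.1 g.1 : ℂ).im = -(inner ℂ g.1 p.1 : ℂ).im := by
      rw [← (inner_conj_symm p.1 g.1 : _ = (inner ℂ p.1 g.1 : ℂ)), Complex.conj_im]
    rw [inner_neg_left, inner_add_left, inner_add_right, inner_add_right, inner_neg_left]
    simp only [Complex.neg_im, Complex.add_im]
    rw [hgg, hpg]
    ring

/-- The Cygan metric on the Heisenberg group is a genuine metric and is left-invariant. -/
theorem cygan_metric (n : ℕ) (hn : 1 ≤ n) :
    (∀ p q : EuclideanSpace ℂ (Fin (n - 1)) × ℝ, 0 ≤ cyganDist p q) ∧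
    (∀ p q : EuclideanSpace ℂ (Fin (n - 1)) × ℝ, cyganDist p q = 0 ↔ p = q) ∧
    (∀ p q : EuclideanSpace ℂ (Fin (n - 1)) × ℝ, cyganDist p q = cyganDist q p) ∧
    (∀ p q r : EuclideanSpace ℂ (Fin (n - 1)) × ℝ,
        cyganDist p r ≤ cyganDist p q + cyganDist q r) ∧
    (∀ g p q : EuclideanSpace ℂ (Fin (n - 1)) × ℝ,
        cyganDist (heisMul g p) (heisMul g q) = cyganDist p q) := by
  exact ⟨fun p q => cygan_dist_nonneg p q, fun p q => cygan_dist_eq_zero p q,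
    fun p q => cygan_dist_symm p q, fun p q r => cygan_dist_triangle p q r,
    fun g p q => cygan_dist_left_invariant g p q⟩
end
end

section
/- Let 0 < ζ < π/2, 0 < η < π − 2ζ, and let φ(z) = z·exp(iη(1 − (arg z − ζ)/(π − 2ζ))) on the open sector Σ = {z ∈ ℂ ∖ {0} : ζ < arg z < π − ζ}. Then at every z ∈ Σ the map φ, viewed as a map ℝ² → ℝ², is differentiable with invertible derivative Dφ(z), and its linear distortion equals ‖Dφ(z)‖ · ‖Dφ(z)^{-1}‖ = (π − 2ζ)/(π − 2ζ − η); more precisely the two singular values of Dφ(z) are 1 and (π − 2ζ − η)/(π − 2ζ). -/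
set_option maxHeartbeats 1000000

noncomputable section

open Complex

/-- The real-linear continuous map `w ↦ a*w + b*conj w`. -/
def bendT (a b : ℂ) : ℂ →L[ℝ] ℂ :=
  a • (ContinuousLinearMap.id ℝ ℂ) +
    b • (Complex.conjCLE : ℂ ≃L[ℝ] ℂ).toContinuousLinearMap

lemma bendT_apply (a b w : ℂ) : bendT a b w = a * w + b * (starRingEnd ℂ) w := by
  simp [bendT, smul_eq_mul, Complex.conjCLE_apply]

lemma bendT_norm_le (a b : ℂ) : ‖bendT a b‖ ≤ ‖a‖ + ‖b‖ := by
  refine ContinuousLinearMap.opNorm_le_bound _ (by positivity) fun w => ?_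
  rw [bendT_apply]
  calc ‖a * w + b * (starRingEnd ℂ) w‖ ≤ ‖a * w‖ + ‖b * (starRingEnd ℂ) w‖ := norm_add_le _ _
    _ = (‖a‖ + ‖b‖) * ‖w‖ := by
        rw [norm_mul, norm_mul, RCLike.norm_conj]; ring

/-- On the open sector `Σ = {ζ < arg z < π − ζ}`, the bending map
`φ(z) = z·exp(iη(1 − (arg z − ζ)/(π − 2ζ)))`, viewed as a map `ℝ² → ℝ²` (i.e. an
`ℝ`-differentiable map of `ℂ`), is differentiable at every point with invertible
derivative `Dφ(z)`, whose linear distortion is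
`‖Dφ(z)‖·‖Dφ(z)⁻¹‖ = (π − 2ζ)/(π − 2ζ − η)`; more precisely its two singular values
are `1` (the operator norm of `Dφ(z)`) and `(π − 2ζ − η)/(π − 2ζ)` (the reciprocal of
the operator norm of `Dφ(z)⁻¹`). -/
theorem bending_map_linear_distortion (ζ η : ℝ) (hζ0 : 0 < ζ) (hζ : ζ < Real.pi / 2)
    (hη0 : 0 < η) (hη : η < Real.pi - 2 * ζ) :
    ∀ z : ℂ, z ≠ 0 → ζ < Complex.arg z → Complex.arg z < Real.pi - ζ →
      ∃ D : ℂ ≃L[ℝ] ℂ,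
        HasFDerivAt
          (fun w : ℂ => w * Complex.exp
            (((η * (1 - (Complex.arg w - ζ) / (Real.pi - 2 * ζ)) : ℝ) : ℂ) * Complex.I))
          (D : ℂ →L[ℝ] ℂ) z ∧
        ‖(D : ℂ →L[ℝ] ℂ)‖ * ‖(D.symm : ℂ →L[ℝ] ℂ)‖ =
          (Real.pi - 2 * ζ) / (Real.pi - 2 * ζ - η) ∧
        ‖(D : ℂ →L[ℝ] ℂ)‖ = 1 ∧
        ‖(D.symm : ℂ →L[ℝ] ℂ)‖⁻¹ = (Real.pi - 2 * ζ - η) / (Real.pi - 2 * ζ) := by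
  intro z hz hθ1 hθ2
  obtain ⟨K, hKdef⟩ : ∃ x : ℝ, x = Real.pi - 2 * ζ := ⟨_, rfl⟩
  rw [← hKdef]
  rw [← hKdef] at hη
  have hK : 0 < K := lt_trans hη0 hη
  obtain ⟨c, hcdef⟩ : ∃ x : ℝ, x = η / K := ⟨_, rfl⟩
  have hc0 : 0 < c := hcdef ▸ div_pos hη0 hK
  have hc1 : c < 1 := hcdef ▸ (div_lt_one hK).2 hη
  have h1c : (0:ℝ) < 1 - c := by linarith
  have h1cC : (1 : ℂ) - (c:ℂ) ≠ 0 := by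
    rw [show (1:ℂ) - (c:ℂ) = ((1 - c : ℝ) : ℂ) by push_cast; ring]
    exact Complex.ofReal_ne_zero.2 (ne_of_gt h1c)
  -- z is in the upper half plane
  have hθ0 : 0 < Complex.arg z := lt_trans hζ0 hθ1
  have hθπ : Complex.arg z < Real.pi := by
    have := Real.pi_pos; linarith
  have him : 0 < z.im := by
    have hs : 0 < Real.sin (Complex.arg z) := Real.sin_pos_of_pos_of_lt_pi hθ0 hθπ
    have h2 : ‖z‖ * Real.sin (Complex.arg z) = z.im := Complex.norm_mul_sin_arg z
    have habs : 0 < ‖z‖ := by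
      simpa using hz
    nlinarith
  have hslit : z ∈ Complex.slitPlane := Complex.mem_slitPlane_iff.2 (Or.inr (ne_of_gt him))
  have hcz : (starRingEnd ℂ) z ≠ 0 := by simpa using hz
  -- constants
  obtain ⟨E, hEdef⟩ : ∃ x : ℂ,
      x = Complex.exp (((η * (1 - (Complex.arg z - ζ) / K) : ℝ):ℂ) * Complex.I) := ⟨_, rfl⟩
  have hEne : E ≠ 0 := hEdef ▸ Complex.exp_ne_zero _
  have hEconj : (starRingEnd ℂ) E = E⁻¹ := by
    rw [hEdef, ← Complex.exp_conj, ← Complex.exp_neg]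
    congr 1
    simp
  have hEabs : ‖E‖ = 1 := by
    rw [hEdef]
    simpa using Complex.norm_exp_ofReal_mul_I (η * (1 - (Complex.arg z - ζ) / K))
  obtain ⟨a, hadef⟩ : ∃ x : ℂ, x = E * (1 - (c:ℂ)/2) := ⟨_, rfl⟩
  obtain ⟨b, hbdef⟩ : ∃ x : ℂ, x = E * ((c:ℂ)/2) * z / (starRingEnd ℂ) z := ⟨_, rfl⟩
  obtain ⟨a', ha'def⟩ : ∃ x : ℂ, x = (1 - (c:ℂ))⁻¹ * (starRingEnd ℂ) a := ⟨_, rfl⟩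
  obtain ⟨b', hb'def⟩ : ∃ x : ℂ, x = -((1 - (c:ℂ))⁻¹ * b) := ⟨_, rfl⟩
  -- norms of the coefficients
  have hna : ‖a‖ = 1 - c/2 := by
    rw [hadef, norm_mul, hEabs, one_mul,
      show (1 : ℂ) - (c:ℂ)/2 = ((1 - c/2 : ℝ):ℂ) by push_cast; ring,
      Complex.norm_real, Real.norm_of_nonneg (by linarith)]
  have hnb : ‖b‖ = c/2 := by
    have habs : ‖z‖ ≠ 0 := by simpa using hz
    rw [hbdef, norm_div, norm_mul, norm_mul, hEabs, one_mul,
      show ((c:ℂ)/2) = ((c/2 : ℝ):ℂ) by push_cast; ring,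
      Complex.norm_real, Real.norm_of_nonneg (by positivity), RCLike.norm_conj]
    have hnz : ‖z‖ ≠ 0 := norm_ne_zero_iff.2 hz
    field_simp
  have hn1c : ‖(1 - (c:ℂ))⁻¹‖ = (1-c)⁻¹ := by
    rw [show (1:ℂ) - (c:ℂ) = ((1 - c : ℝ):ℂ) by push_cast; ring, norm_inv,
      Complex.norm_real, Real.norm_of_nonneg (le_of_lt h1c)]
  have hna' : ‖a'‖ = (1-c)⁻¹ * (1 - c/2) := by
    rw [ha'def, norm_mul, hn1c, RCLike.norm_conj, hna]
  have hnb' : ‖b'‖ = (1-c)⁻¹ * (c/2) := by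
    rw [hb'def, norm_neg, norm_mul, hn1c, hnb]
  -- inverse identities
  have hconja : (starRingEnd ℂ) a = E⁻¹ * (1 - (c:ℂ)/2) := by
    rw [hadef]
    simp [map_mul, map_sub, map_div₀, Complex.conj_ofReal, hEconj, map_ofNat]
  have hconjb : (starRingEnd ℂ) b = E⁻¹ * ((c:ℂ)/2) * (starRingEnd ℂ) z / z := by
    rw [hbdef]
    simp [map_mul, map_div₀, Complex.conj_ofReal, hEconj, map_ofNat]
  have hconja' : (starRingEnd ℂ) a' = (1 - (c:ℂ))⁻¹ * a := by
    rw [ha'def]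
    simp [map_mul, map_inv₀, map_sub, Complex.conj_ofReal]
  have hconjb' : (starRingEnd ℂ) b' = -((1 - (c:ℂ))⁻¹ * (starRingEnd ℂ) b) := by
    rw [hb'def]
    simp [map_mul, map_inv₀, map_sub, Complex.conj_ofReal]
  have haa : (starRingEnd ℂ) a * a = (1 - (c:ℂ)/2)^2 := by
    rw [hconja, hadef]
    field_simp
  have hbb : b * (starRingEnd ℂ) b = ((c:ℂ)/2)^2 := by
    rw [hconjb, hbdef]
    field_simp
  have key1 : a' * a + b' * (starRingEnd ℂ) b = 1 := by
    calc a' * a + b' * (starRingEnd ℂ) b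
        = (1 - (c:ℂ))⁻¹ * ((starRingEnd ℂ) a * a) -
            (1 - (c:ℂ))⁻¹ * (b * (starRingEnd ℂ) b) := by rw [ha'def, hb'def]; ring
      _ = 1 := by
          rw [haa, hbb]
          field_simp
          ring
  have key2 : a' * b + b' * (starRingEnd ℂ) a = 0 := by
    rw [ha'def, hb'def]
    ring
  have key1' : a * a' + b * (starRingEnd ℂ) b' = 1 := by
    calc a * a' + b * (starRingEnd ℂ) b'
        = (1 - (c:ℂ))⁻¹ * ((starRingEnd ℂ) a * a) -
            (1 - (c:ℂ))⁻¹ * (b * (starRingEnd ℂ) b) := by rw [ha'def, hconjb']; ring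
      _ = 1 := by
          rw [haa, hbb]
          field_simp
          ring
  have key2' : a * b' + b * (starRingEnd ℂ) a' = 0 := by
    rw [hconja', hb'def]
    ring
  have hinv1 : Function.LeftInverse (bendT a' b') (bendT a b) := by
    intro w
    rw [bendT_apply, bendT_apply, map_add, map_mul, map_mul, Complex.conj_conj]
    linear_combination w * key1 + ((starRingEnd ℂ) w) * key2
  have hinv2 : Function.RightInverse (bendT a' b') (bendT a b) := by
    intro w
    rw [bendT_apply, bendT_apply, map_add, map_mul, map_mul, Complex.conj_conj]
    linear_combination w * key1' + ((starRingEnd ℂ) w) * key2'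
  obtain ⟨D, hDdef⟩ : ∃ x : ℂ ≃L[ℝ] ℂ,
      x = ContinuousLinearEquiv.equivOfInverse (bendT a b) (bendT a' b') hinv1 hinv2 := ⟨_, rfl⟩
  have hDcoe : (D : ℂ →L[ℝ] ℂ) = bendT a b := by rw [hDdef]; rfl
  have hDsymm : (D.symm : ℂ →L[ℝ] ℂ) = bendT a' b' := by rw [hDdef]; rfl
  -- norm of D
  have hnormD : ‖(D : ℂ →L[ℝ] ℂ)‖ = 1 := by
    rw [hDcoe]
    refine le_antisymm ?_ ?_
    · have h := bendT_norm_le a b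
      rw [hna, hnb] at h
      linarith
    · have hTz : bendT a b z = E * z := by
        rw [bendT_apply, hadef, hbdef]
        field_simp
        ring
      have h := (bendT a b).le_opNorm z
      rw [hTz, norm_mul, hEabs, one_mul] at h
      have hzpos : 0 < ‖z‖ := norm_pos_iff.2 hz
      nlinarith
  have hnormDsymm : ‖(D.symm : ℂ →L[ℝ] ℂ)‖ = (1-c)⁻¹ := by
    rw [hDsymm]
    refine le_antisymm ?_ ?_
    · have h := bendT_norm_le a' b'
      rw [hna', hnb'] at h
      calc ‖bendT a' b'‖ ≤ (1-c)⁻¹ * (1 - c/2) + (1-c)⁻¹ * (c/2) := h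
        _ = (1-c)⁻¹ := by ring
    · have hconjIzE : (starRingEnd ℂ) (Complex.I * z * E) =
          -Complex.I * (starRingEnd ℂ) z * E⁻¹ := by
        rw [map_mul, map_mul, Complex.conj_I, hEconj]
      have hTw' : (1 - (c:ℂ)) * (bendT a' b' (Complex.I * z * E)) = Complex.I * z := by
        have u : E * E⁻¹ = 1 := mul_inv_cancel₀ hEne
        have v : (starRingEnd ℂ) z * ((starRingEnd ℂ) z)⁻¹ = 1 := mul_inv_cancel₀ hcz
        have w₀ : (1 - (c:ℂ)) * (1 - (c:ℂ))⁻¹ = 1 := mul_inv_cancel₀ h1cC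
        rw [bendT_apply, hconjIzE, ha'def, hb'def, hconja, hbdef]
        linear_combination
          (Complex.I*z*((1-(c:ℂ)/2)*E*E⁻¹ +
            ((c:ℂ)/2)*E*E⁻¹*((starRingEnd ℂ) z)*((starRingEnd ℂ) z)⁻¹)) * w₀ +
          (Complex.I*z*((1-(c:ℂ)/2) + ((c:ℂ)/2)*((starRingEnd ℂ) z)*((starRingEnd ℂ) z)⁻¹)) * u +
          (Complex.I*z*((c:ℂ)/2)) * v
      have hTw : bendT a' b' (Complex.I * z * E) = (1 - (c:ℂ))⁻¹ * (Complex.I * z) := by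
        rw [eq_inv_mul_iff_mul_eq₀ h1cC]; exact hTw'
      have h := (bendT a' b').le_opNorm (Complex.I * z * E)
      rw [hTw] at h
      simp only [norm_mul, Complex.norm_I, hEabs, hn1c, one_mul, mul_one] at h
      have hzpos : 0 < ‖z‖ := norm_pos_iff.2 hz
      have h1cinv : 0 < (1-c)⁻¹ := by positivity
      nlinarith
  -- the derivative of arg
  have harg : HasFDerivAt Complex.arg
      (Complex.imCLM.comp (((1 : ℂ →L[ℂ] ℂ).smulRight z⁻¹).restrictScalars ℝ)) z := by
    have h0 : HasFDerivAt Complex.log ((1 : ℂ →L[ℂ] ℂ).smulRight z⁻¹) z :=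
      (Complex.hasDerivAt_log hslit).hasFDerivAt
    have h1 := h0.restrictScalars ℝ
    have h2 := (Complex.imCLM.hasFDerivAt (x := Complex.log z)).comp z h1
    have heq : Complex.arg = fun w => (Complex.log w).im := by
      funext w; rw [Complex.log_im]
    rw [heq]
    exact h2
  have hg1 := (((harg.sub_const ζ).mul_const K⁻¹).const_sub 1).const_mul η
  have hg2 := (Complex.ofRealCLM.hasFDerivAt.comp z hg1).mul_const Complex.I
  have hexp := hg2.cexp
  have hφ := (hasFDerivAt_id z).mul hexp
  refine ⟨D, ?_, ?_, hnormD, ?_⟩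
  · rw [hDcoe]
    refine hφ.congr_fderiv ?_
    ext w
    simp only [ContinuousLinearMap.add_apply, ContinuousLinearMap.coe_smul', Pi.smul_apply,
      ContinuousLinearMap.coe_comp', Function.comp_apply, ContinuousLinearMap.smulRight_apply,
      ContinuousLinearMap.coe_restrictScalars', ContinuousLinearMap.one_apply,
      ContinuousLinearMap.id_apply, Complex.ofRealCLM_apply, Complex.imCLM_apply,
      ContinuousLinearMap.coe_sub', Pi.sub_apply, ContinuousLinearMap.zero_apply,
      ContinuousLinearMap.neg_apply, smul_eq_mul, bendT_apply, id_eq]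
    have hEdef' : Complex.exp ((((η * (1 - (Complex.arg z - ζ) * K⁻¹)):ℝ):ℂ) * Complex.I)
        = E := by rw [hEdef, div_eq_mul_inv]
    have hKC : (K:ℂ) ≠ 0 := Complex.ofReal_ne_zero.2 (ne_of_gt hK)
    have h2I : (2:ℂ) * Complex.I ≠ 0 := by simp [Complex.I_ne_zero]
    have hM' : (((w * z⁻¹).im : ℝ) : ℂ)
        = (w * z⁻¹ - (starRingEnd ℂ) w * ((starRingEnd ℂ) z)⁻¹) / (2 * Complex.I) := by
      rw [eq_div_iff h2I, ← map_inv₀, ← map_mul]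
      have hsc := Complex.sub_conj (w * z⁻¹)
      push_cast at hsc
      linear_combination -hsc
    rw [hEdef', hadef, hbdef, hcdef]
    push_cast
    rw [hM']
    field_simp
    ring
  · rw [hnormD, hnormDsymm, one_mul, hcdef,
      show (1:ℝ) - η/K = (K-η)/K from by field_simp, inv_div]
  · rw [hnormDsymm, inv_inv, hcdef]
    field_simp
end
end
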